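/- Let R be a principal Artinian local ring of length k with maximal ideal 𝔪, and consider a bipartite module graph over R. Suppose there is a core vertex v₀ such that for every vertex v there exists a surjective path from v₀ to v. Then for every global section s there exists an integer δ with 0 ≤ δ ≤ k such that R·s(v) = 𝔪^δ·S(v) for every vertex v; in particular, the global section s is uniquely determined by its value s(v₀) at the core vertex v₀. -/

import Mathlib

/-!
Write `𝔪 = (π)`. By Nakayama the chain `R = 𝔪^0 > 𝔪^1 > ⋯` is strict until it reaches `0`,
so a ring of length `k` has `𝔪^k = 0`; hence every element of `R` is a unit times `π^δ` with
`δ ≤ k`, and in a cyclic module `R·x = 𝔪^δ·M`. A surjective edge map carries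
`R·x = 𝔪^δ·S(v)` to `R·ψ(x) = 𝔪^δ·S(e)`, and an isomorphism carries it back, so along a
surjective path the exponent of `s(v₀)` reaches every vertex. Injectivity of the same
isomorphisms makes `s` determined by `s(v₀)`.
-/

noncomputable def moduleLength (R M : Type*) [Ring R] [AddCommGroup M] [Module R M] : ℕ∞ :=
  (Order.krullDim (Submodule R M)).unbotD 0

theorem moduleLength_eq_length (R M : Type*) [Ring R] [AddCommGroup M] [Module R M] :
    moduleLength R M = Module.length R M := by
  rw [moduleLength, ← Module.coe_length, WithBot.unbotD_coe]

namespace IsLocalRing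

open Ideal

variable {R : Type*} [CommRing R] [IsLocalRing R]

theorem maximalIdeal_pow_succ_lt_pow [IsNoetherianRing R] {n : ℕ}
    (hn : maximalIdeal R ^ n ≠ ⊥) : maximalIdeal R ^ (n + 1) < maximalIdeal R ^ n := by
  refine (Ideal.pow_le_pow_right n.le_succ).lt_of_ne fun h => hn ?_
  refine Submodule.eq_bot_of_le_smul_of_le_jacobson_bot _ _ (IsNoetherian.noetherian _) ?_
    (jacobson_eq_maximalIdeal _ bot_ne_top).ge
  rw [smul_eq_mul, ← pow_succ', h]

theorem natCast_le_coheight_maximalIdeal_pow [IsNoetherianRing R] :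
    ∀ {n : ℕ}, maximalIdeal R ^ n ≠ ⊥ → (n : ℕ∞) ≤ Order.coheight (maximalIdeal R ^ n)
  | 0, _ => by simp
  | n + 1, hn => by
    have hn' : maximalIdeal R ^ n ≠ ⊥ := fun h =>
      hn (le_bot_iff.mp (h ▸ Ideal.pow_le_pow_right n.le_succ))
    calc ((n + 1 : ℕ) : ℕ∞) = n + 1 := Nat.cast_succ n
      _ ≤ Order.coheight (maximalIdeal R ^ n) + 1 := by
        gcongr; exact natCast_le_coheight_maximalIdeal_pow hn'
      _ ≤ Order.coheight (maximalIdeal R ^ (n + 1)) :=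
        Order.coheight_add_one_le (maximalIdeal_pow_succ_lt_pow hn')

theorem maximalIdeal_pow_eq_bot_of_length_eq [IsNoetherianRing R] {k : ℕ}
    (hk : Module.length R R = k) : maximalIdeal R ^ k = ⊥ := by
  by_contra hne
  have : (k : ℕ∞) + 1 ≤ k := calc
    (k : ℕ∞) + 1 ≤ Order.coheight (maximalIdeal R ^ k) + 1 := by
        gcongr; exact natCast_le_coheight_maximalIdeal_pow hne
    _ ≤ Order.coheight (⊥ : Submodule R R) :=
        Order.coheight_add_one_le (bot_lt_iff_ne_bot.mpr hne)
    _ = k := by rw [← Module.length_eq_coheight, hk]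
  exact absurd this (by norm_cast; omega)

theorem span_singleton_eq_maximalIdeal_pow {π : R} (hπ : maximalIdeal R = span {π}) {k : ℕ}
    (hk : maximalIdeal R ^ k = ⊥) (x : R) : ∃ δ ≤ k, span {x} = maximalIdeal R ^ δ := by
  classical
  by_cases hx : x = 0
  · exact ⟨k, le_rfl, by rw [hx, hk, span_singleton_eq_bot]⟩
  set δ := Nat.findGreatest (fun d => x ∈ maximalIdeal R ^ d) k
  have hmem : x ∈ maximalIdeal R ^ δ :=
    Nat.findGreatest_spec (P := fun d => x ∈ maximalIdeal R ^ d) (Nat.zero_le k) (by simp)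
  have hnot : x ∉ maximalIdeal R ^ (δ + 1) := by
    by_cases hδ : δ + 1 ≤ k
    · exact Nat.findGreatest_is_greatest δ.lt_succ_self hδ
    · intro h
      have : x ∈ maximalIdeal R ^ k := Ideal.pow_le_pow_right (by omega) h
      exact hx (by simpa [hk] using this)
  rw [hπ, span_singleton_pow, mem_span_singleton'] at hmem
  obtain ⟨a, hxa⟩ := hmem
  have ha : IsUnit a := by
    by_contra ha
    refine hnot ?_
    rw [← hxa, pow_succ, mul_comm]
    exact mul_mem_mul ((mem_maximalIdeal a).mpr ha)
      (hπ ▸ Ideal.pow_mem_pow (mem_span_singleton_self π) δ)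
  refine ⟨δ, Nat.findGreatest_le k, ?_⟩
  rw [← hxa, span_singleton_mul_left_unit ha, hπ, span_singleton_pow]

end IsLocalRing

namespace Submodule

open Function

variable {R M M' N : Type*} [CommRing R] [AddCommGroup M] [Module R M] [AddCommGroup M']
  [Module R M'] [AddCommGroup N] [Module R N]

theorem span_singleton_apply_eq_smul_top {f : M →ₗ[R] N} (hf : Surjective f) {I : Ideal R}
    {x : M} (h : span R {x} = I • ⊤) : span R {f x} = I • ⊤ := by
  rw [← Set.image_singleton, ← map_span, h, map_smul'', map_top, LinearMap.range_eq_top.mpr hf]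

theorem span_singleton_eq_smul_top_of_apply_eq {f : M →ₗ[R] N} {g : M' →ₗ[R] N}
    (hf : Surjective f) (hg : Bijective g) {I : Ideal R} {x : M} {y : M'} (hxy : f x = g y)
    (h : span R {x} = I • ⊤) : span R {y} = I • ⊤ := by
  have hgy := hxy ▸ span_singleton_apply_eq_smul_top hf h
  simpa using span_singleton_apply_eq_smul_top (LinearEquiv.ofBijective g hg).symm.surjective hgy

theorem exists_span_singleton_eq_maximalIdeal_pow_smul_top [IsLocalRing R] {π : R}
    (hπ : IsLocalRing.maximalIdeal R = Ideal.span {π}) {k : ℕ}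
    (hk : IsLocalRing.maximalIdeal R ^ k = ⊥) {m : M} (hm : span R {m} = ⊤) (x : M) :
    ∃ δ ≤ k, span R {x} = IsLocalRing.maximalIdeal R ^ δ • ⊤ := by
  obtain ⟨c, rfl⟩ := mem_span_singleton.mp (hm ▸ mem_top : x ∈ span R {m})
  obtain ⟨δ, hδk, hc⟩ := IsLocalRing.span_singleton_eq_maximalIdeal_pow hπ hk c
  have hsurj : Surjective (LinearMap.toSpanSingleton R M m) := by
    rw [← LinearMap.range_eq_top, ← LinearMap.span_singleton_eq_range, hm]
  refine ⟨δ, hδk, ?_⟩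
  simpa using span_singleton_apply_eq_smul_top hsurj (x := c)
    (by rw [Ideal.smul_eq_mul, Ideal.mul_top]; exact hc)

end Submodule

theorem holds_at_last_of_path {V E : Type*} {vpos vneg : E → V} {bpos bneg : E → Prop}
    {P : V → Prop} (hposneg : ∀ e, bneg e → P (vpos e) → P (vneg e))
    (hnegpos : ∀ e, bpos e → P (vneg e) → P (vpos e)) {r : ℕ} {vv : Fin (r + 1) → V}
    {ee : Fin r → E}
    (horient : ∀ i : Fin r,
      (vpos (ee i) = vv i.castSucc ∧ vneg (ee i) = vv i.succ) ∨
      (vpos (ee i) = vv i.succ ∧ vneg (ee i) = vv i.castSucc))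
    (hsurj : ∀ i : Fin r,
      (vpos (ee i) = vv i.succ → bpos (ee i)) ∧ (vneg (ee i) = vv i.succ → bneg (ee i)))
    (h0 : P (vv 0)) : P (vv (Fin.last r)) := by
  induction Fin.last r using Fin.induction with
  | zero => exact h0
  | succ i ih =>
    rcases horient i with ⟨hp, hn⟩ | ⟨hp, hn⟩
    · exact hn ▸ hposneg _ ((hsurj i).2 hn) (hp ▸ ih)
    · exact hp ▸ hnegpos _ ((hsurj i).1 hp) (hn ▸ ih)

theorem global_section_of_stub_sheaf_general
    {R : Type*} [CommRing R] [IsLocalRing R] [IsArtinianRing R]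
    (hprin : (IsLocalRing.maximalIdeal R).IsPrincipal)
    (k : ℕ) (hk : moduleLength R R = (k : ℕ∞))
    {V E : Type*} (vpos vneg : E → V)
    (SV : V → Type*) [∀ v, AddCommGroup (SV v)] [∀ v, Module R (SV v)]
    (SE : E → Type*) [∀ e, AddCommGroup (SE e)] [∀ e, Module R (SE e)]
    (ψpos : ∀ e, SV (vpos e) →ₗ[R] SE e) (ψneg : ∀ e, SV (vneg e) →ₗ[R] SE e)
    (hψpos : ∀ e, Function.Bijective (ψpos e))
    (hψneg : ∀ e, Function.Surjective (ψneg e))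
    -- a core vertex `v₀` with a surjective path to every vertex
    (v₀ : V) (hcore : Nonempty (Module.Basis (Fin 1) R (SV v₀)))
    (hpath : ∀ v : V, ∃ (r : ℕ) (vv : Fin (r + 1) → V) (ee : Fin r → E),
      vv 0 = v₀ ∧ vv (Fin.last r) = v ∧
      (∀ i : Fin r,
        (vpos (ee i) = vv i.castSucc ∧ vneg (ee i) = vv i.succ) ∨
        (vpos (ee i) = vv i.succ ∧ vneg (ee i) = vv i.castSucc)) ∧
      (∀ i : Fin r,
        (vpos (ee i) = vv i.succ → Function.Bijective (ψpos (ee i))) ∧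
        (vneg (ee i) = vv i.succ → Function.Bijective (ψneg (ee i)))))
    -- a global section `s = (sV, sE)`
    (sV : ∀ v, SV v) (sE : ∀ e, SE e)
    (hsec : ∀ e, ψpos e (sV (vpos e)) = sE e ∧ ψneg e (sV (vneg e)) = sE e) :
    (∃ δ : ℕ, δ ≤ k ∧ ∀ v : V,
        Submodule.span R {sV v} =
          (IsLocalRing.maximalIdeal R) ^ δ • (⊤ : Submodule R (SV v))) ∧
    (∀ (tV : ∀ v, SV v) (tE : ∀ e, SE e),
        (∀ e, ψpos e (tV (vpos e)) = tE e ∧ ψneg e (tV (vneg e)) = tE e) →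
        tV v₀ = sV v₀ → (∀ v, tV v = sV v) ∧ (∀ e, tE e = sE e)) := by
  have propagate : ∀ P : V → Prop,
      (∀ e, Function.Bijective (ψneg e) → P (vpos e) → P (vneg e)) →
      (∀ e, Function.Bijective (ψpos e) → P (vneg e) → P (vpos e)) → P v₀ → ∀ v, P v := by
    intro P hposneg hnegpos h₀ v
    obtain ⟨r, vv, ee, hfirst, rfl, horient, hsurj⟩ := hpath v
    exact holds_at_last_of_path hposneg hnegpos horient hsurj (hfirst ▸ h₀)
  obtain ⟨π, hπ⟩ := hprin
  have hmk :=
    IsLocalRing.maximalIdeal_pow_eq_bot_of_length_eq (moduleLength_eq_length R R ▸ hk)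
  obtain ⟨b⟩ := hcore
  have hgen : Submodule.span R {b 0} = ⊤ := by rw [← b.span_eq, Set.range_unique]; rfl
  obtain ⟨δ, hδk, hδ₀⟩ := Submodule.exists_span_singleton_eq_maximalIdeal_pow_smul_top
    (hπ.trans Ideal.submodule_span_eq) hmk hgen (sV v₀)
  refine ⟨⟨δ, hδk, propagate _ (fun e hb => ?_) (fun e hb => ?_) hδ₀⟩, fun tV tE htsec ht₀ => ?_⟩
  · exact Submodule.span_singleton_eq_smul_top_of_apply_eq (hψpos e).surjective hb
      ((hsec e).1.trans (hsec e).2.symm)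
  · exact Submodule.span_singleton_eq_smul_top_of_apply_eq (hψneg e) hb
      ((hsec e).2.trans (hsec e).1.symm)
  have hV : ∀ v, tV v = sV v := propagate _
    (fun e hb h => hb.injective <| by
      rw [(htsec e).2, (hsec e).2, ← (htsec e).1, ← (hsec e).1, h])
    (fun e hb h => hb.injective <| by
      rw [(htsec e).1, (hsec e).1, ← (htsec e).2, ← (hsec e).2, h])
    ht₀
  exact ⟨hV, fun e => by rw [← (htsec e).1, ← (hsec e).1, hV]⟩

/-- In a bipartite module graph over a principal Artinian local ring `R` of length `k`,
if there is a core vertex `v₀` admitting a surjective path to every vertex, then any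
global section `s` satisfies `R·s(v) = 𝔪^δ·S(v)` for a single integer `0 ≤ δ ≤ k`, and
`s` is determined by its value at `v₀`. -/
theorem global_section_of_stub_sheaf
    {R : Type*} [CommRing R] [IsLocalRing R] [IsArtinianRing R]
    (hprin : (IsLocalRing.maximalIdeal R).IsPrincipal)
    (k : ℕ) (hk : moduleLength R R = (k : ℕ∞))
    {V E : Type*} (even : V → Prop) (vpos vneg : E → V)
    (hpos : ∀ e, even (vpos e)) (hneg : ∀ e, ¬ even (vneg e))
    (SV : V → Type*) [∀ v, AddCommGroup (SV v)] [∀ v, Module R (SV v)]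
    (SE : E → Type*) [∀ e, AddCommGroup (SE e)] [∀ e, Module R (SE e)]
    (hfinV : ∀ v, IsFiniteLength R (SV v))
    (hcycV : ∀ v, ∃ x : SV v, Submodule.span R {x} = ⊤)
    (hfinE : ∀ e, IsFiniteLength R (SE e))
    (hcycE : ∀ e, ∃ x : SE e, Submodule.span R {x} = ⊤)
    (ψpos : ∀ e, SV (vpos e) →ₗ[R] SE e) (ψneg : ∀ e, SV (vneg e) →ₗ[R] SE e)
    (hψpos : ∀ e, Function.Bijective (ψpos e))
    (hψneg : ∀ e, Function.Surjective (ψneg e))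
    -- a core vertex `v₀` with a surjective path to every vertex
    (v₀ : V) (hcore : Nonempty (Module.Basis (Fin 1) R (SV v₀)))
    (hpath : ∀ v : V, ∃ (r : ℕ) (vv : Fin (r + 1) → V) (ee : Fin r → E),
      vv 0 = v₀ ∧ vv (Fin.last r) = v ∧
      (∀ i : Fin r,
        (vpos (ee i) = vv i.castSucc ∧ vneg (ee i) = vv i.succ) ∨
        (vpos (ee i) = vv i.succ ∧ vneg (ee i) = vv i.castSucc)) ∧
      (∀ i : Fin r,
        (vpos (ee i) = vv i.succ → Function.Bijective (ψpos (ee i))) ∧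
        (vneg (ee i) = vv i.succ → Function.Bijective (ψneg (ee i)))))
    -- a global section `s = (sV, sE)`
    (sV : ∀ v, SV v) (sE : ∀ e, SE e)
    (hsec : ∀ e, ψpos e (sV (vpos e)) = sE e ∧ ψneg e (sV (vneg e)) = sE e) :
    (∃ δ : ℕ, δ ≤ k ∧ ∀ v : V,
        Submodule.span R {sV v} =
          (IsLocalRing.maximalIdeal R) ^ δ • (⊤ : Submodule R (SV v))) ∧
    (∀ (tV : ∀ v, SV v) (tE : ∀ e, SE e),
        (∀ e, ψpos e (tV (vpos e)) = tE e ∧ ψneg e (tV (vneg e)) = tE e) →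
        tV v₀ = sV v₀ → (∀ v, tV v = sV v) ∧ (∀ e, tE e = sE e)) :=
  global_section_of_stub_sheaf_general hprin k hk vpos vneg SV SE ψpos ψneg hψpos hψneg v₀ hcore
    hpath sV sE hsec
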